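/- arXiv:2009.03975 — 2 statements merged into one kernel-verified Lean document; each statement's English description precedes it below -/
import Mathlib

section
/- (Probabilistic interpretation at p = 1.) Mod_{1,σ}(Γ)^{−1} = min over pmfs μ on Γ of max_{e∈E} σ(e)^{−1} η_μ(e), where Mod_{1,σ}(Γ) is the infimum of Σ_{e∈E} σ(e)ρ(e) over admissible densities ρ and η_μ(e) = Σ_{γ∈Γ} N(γ,e)μ(γ). -/
open Finset

noncomputable section

/-- A density `ρ` is admissible for the usage matrix `N` if it is nonnegative and
every object has `ρ`-length at least 1. -/
def IsAdmissible {E Γ : Type*} [Fintype E] (N : Γ → E → ℝ) (ρ : E → ℝ) : Prop :=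
  (∀ e, 0 ≤ ρ e) ∧ ∀ γ : Γ, 1 ≤ ∑ e, N γ e * ρ e

/-- The `p`-energy of a density. -/
def pEnergy {E : Type*} [Fintype E] (σ : E → ℝ) (p : ℝ) (ρ : E → ℝ) : ℝ :=
  ∑ e, σ e * ρ e ^ p

/-- The `p`-modulus: the infimum of the `p`-energy over admissible densities. -/
def pModulus {E Γ : Type*} [Fintype E] (N : Γ → E → ℝ) (σ : E → ℝ) (p : ℝ) : ℝ :=
  sInf {x | ∃ ρ : E → ℝ, IsAdmissible N ρ ∧ x = pEnergy σ p ρ}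

/-- A probability mass function on `Γ`. -/
def IsPmf {Γ : Type*} [Fintype Γ] (μ : Γ → ℝ) : Prop :=
  (∀ γ, 0 ≤ μ γ) ∧ ∑ γ, μ γ = 1

/-- The expected edge usage `η_μ(e)` of a pmf `μ`. -/
def edgeUsage {E Γ : Type*} [Fintype Γ] (N : Γ → E → ℝ) (μ : Γ → ℝ) (e : E) : ℝ :=
  ∑ γ, N γ e * μ γ

/-!
Rescaling by the edge weights turns the problem into the matrix game `A γ e = N γ e / σ e`, in
which one player picks an object `γ` and the other an edge `e`. By von Neumann's minimax theorem
there are optimal mixed strategies `μ` on `Γ` and `ν` on `E` with common value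
`v = max_e (μᵀ A)(e) ≤ min_γ (A ν)(γ)`, and `v > 0` because every row of `A` is nonzero.
The density `ρ(e) = ν(e) / (v σ(e))` is admissible with energy `1 / v`, while averaging the
admissibility constraints against `μ` shows that every admissible density has energy at least
`1 / v`. Hence `Mod_{1,σ}(Γ) = 1 / v`, and `μ` attains the minimum.
-/

open Matrix

section MatrixGame

variable {m n : Type*} [Fintype m] [Fintype n]

lemma stdSimplex_nonempty [Nonempty m] : (stdSimplex ℝ m).Nonempty := by
  classical
  exact ⟨_, single_mem_stdSimplex ℝ (Classical.arbitrary m)⟩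

lemma dotProduct_le_sup'_of_mem_stdSimplex [Nonempty n] (w : n → ℝ) {ν : n → ℝ}
    (hν : ν ∈ stdSimplex ℝ n) : w ⬝ᵥ ν ≤ univ.sup' univ_nonempty w :=
  calc w ⬝ᵥ ν ≤ ∑ j, univ.sup' univ_nonempty w * ν j :=
        sum_le_sum fun j _ => mul_le_mul_of_nonneg_right (le_sup' w (mem_univ j)) (hν.1 j)
    _ = univ.sup' univ_nonempty w := by rw [← mul_sum, hν.2, mul_one]

/-- Von Neumann's minimax theorem, read off from a saddle point given by Sion's theorem. -/
theorem Matrix.exists_sup'_vecMul_le_mulVec [Nonempty m] [Nonempty n] (A : Matrix m n ℝ) :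
    ∃ μ ∈ stdSimplex ℝ m, ∃ ν ∈ stdSimplex ℝ n,
      ∀ i, univ.sup' univ_nonempty (μ ᵥ* A) ≤ (A *ᵥ ν) i := by
  classical
  obtain ⟨μ, hμ, ν, hν, hsaddle⟩ := Sion.exists_isSaddlePointOn (f := fun μ ν => μ ⬝ᵥ A *ᵥ ν)
    stdSimplex_nonempty (convex_stdSimplex ℝ m) (isCompact_stdSimplex ℝ m)
    (fun ν _ => (by fun_prop : Continuous fun μ : m → ℝ => μ ⬝ᵥ A *ᵥ ν)
      |>.lowerSemicontinuous.lowerSemicontinuousOn _)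
    (fun ν _ => ((dotProductBilin ℝ ℝ).flip (A *ᵥ ν)).convexOn (convex_stdSimplex ℝ m)
      |>.quasiconvexOn)
    (convex_stdSimplex ℝ n) stdSimplex_nonempty (isCompact_stdSimplex ℝ n)
    (fun μ _ => (by fun_prop : Continuous fun ν : n → ℝ => μ ⬝ᵥ A *ᵥ ν)
      |>.upperSemicontinuous.upperSemicontinuousOn _)
    (fun μ _ => ((dotProductBilin ℝ ℝ μ).comp A.mulVecLin).concaveOn (convex_stdSimplex ℝ n)
      |>.quasiconcaveOn)
  refine ⟨μ, hμ, ν, hν, fun i => sup'_le _ _ fun j _ => ?_⟩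
  calc (μ ᵥ* A) j = μ ⬝ᵥ A *ᵥ Pi.single j 1 := by rw [dotProduct_mulVec, dotProduct_single_one]
    _ ≤ Pi.single i 1 ⬝ᵥ A *ᵥ ν :=
        hsaddle _ (single_mem_stdSimplex ℝ i) _ (single_mem_stdSimplex ℝ j)
    _ = (A *ᵥ ν) i := single_one_dotProduct i _

lemma le_sup'_vecMul_of_le_mulVec [Nonempty n] {A : Matrix m n ℝ} {μ : m → ℝ} {ν : n → ℝ}
    {v : ℝ} (hμ : μ ∈ stdSimplex ℝ m) (hν : ν ∈ stdSimplex ℝ n) (hv : ∀ i, v ≤ (A *ᵥ ν) i) :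
    v ≤ univ.sup' univ_nonempty (μ ᵥ* A) :=
  calc v = ∑ i, μ i * v := by rw [← sum_mul, hμ.2, one_mul]
    _ ≤ μ ⬝ᵥ A *ᵥ ν := sum_le_sum fun i _ => mul_le_mul_of_nonneg_left (hv i) (hμ.1 i)
    _ ≤ univ.sup' univ_nonempty (μ ᵥ* A) := by
        rw [dotProduct_mulVec]
        exact dotProduct_le_sup'_of_mem_stdSimplex _ hν

lemma sup'_vecMul_pos [Nonempty n] {A : Matrix m n ℝ} (hA : ∀ i j, 0 ≤ A i j)
    (hrow : ∀ i, ∃ j, 0 < A i j) {μ : m → ℝ} (hμ : μ ∈ stdSimplex ℝ m) :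
    0 < univ.sup' univ_nonempty (μ ᵥ* A) := by
  obtain ⟨i, -, hi⟩ : ∃ i ∈ univ, (0 : m → ℝ) i < μ i :=
    exists_lt_of_sum_lt (by simp [hμ.2])
  obtain ⟨j, hj⟩ := hrow i
  calc 0 < μ i * A i j := mul_pos hi hj
    _ ≤ (μ ᵥ* A) j :=
        single_le_sum (f := fun i => μ i * A i j) (fun i _ => mul_nonneg (hμ.1 i) (hA i j))
          (mem_univ i)
    _ ≤ univ.sup' univ_nonempty (μ ᵥ* A) := le_sup' _ (mem_univ j)

end MatrixGame

section Modulus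

variable {E Γ : Type*} [Fintype E] {N : Γ → E → ℝ} {σ : E → ℝ}

lemma pEnergy_one (σ ρ : E → ℝ) : pEnergy σ 1 ρ = ∑ e, σ e * ρ e := by
  simp only [pEnergy, Real.rpow_one]

lemma pModulus_le_pEnergy (hσ : ∀ e, 0 ≤ σ e) (p : ℝ) {ρ : E → ℝ} (hρ : IsAdmissible N ρ) :
    pModulus N σ p ≤ pEnergy σ p ρ := by
  refine csInf_le ⟨0, ?_⟩ ⟨ρ, hρ, rfl⟩
  rintro _ ⟨ρ', hρ', rfl⟩
  exact sum_nonneg fun e _ => mul_nonneg (hσ e) (Real.rpow_nonneg (hρ'.1 e) p)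

lemma le_pModulus {p c : ℝ} {ρ₀ : E → ℝ} (hρ₀ : IsAdmissible N ρ₀)
    (h : ∀ ρ, IsAdmissible N ρ → c ≤ pEnergy σ p ρ) : c ≤ pModulus N σ p := by
  refine le_csInf ⟨_, ρ₀, hρ₀, rfl⟩ ?_
  rintro _ ⟨ρ, hρ, rfl⟩
  exact h ρ hρ

lemma IsAdmissible.one_le_sum_edgeUsage_mul [Fintype Γ] {ρ : E → ℝ} (hρ : IsAdmissible N ρ)
    {μ : Γ → ℝ} (hμ : IsPmf μ) : 1 ≤ ∑ e, edgeUsage N μ e * ρ e :=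
  calc (1 : ℝ) = ∑ γ, μ γ := hμ.2.symm
    _ ≤ ∑ γ, μ γ * ∑ e, N γ e * ρ e :=
        sum_le_sum fun γ _ => le_mul_of_one_le_right (hμ.1 γ) (hρ.2 γ)
    _ = ∑ e, edgeUsage N μ e * ρ e := by
        simp only [edgeUsage, mul_sum, sum_mul]
        rw [sum_comm]
        exact sum_congr rfl fun _ _ => sum_congr rfl fun _ _ => by ring

lemma inv_le_pEnergy_one [Fintype Γ] {μ : Γ → ℝ} {v : ℝ} (hμ : IsPmf μ) (hv : 0 < v)
    (hμv : ∀ e, edgeUsage N μ e ≤ v * σ e) {ρ : E → ℝ} (hρ : IsAdmissible N ρ) :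
    v⁻¹ ≤ pEnergy σ 1 ρ := by
  rw [inv_le_iff_one_le_mul₀ hv, pEnergy_one, sum_mul]
  calc (1 : ℝ) ≤ ∑ e, edgeUsage N μ e * ρ e := hρ.one_le_sum_edgeUsage_mul hμ
    _ ≤ ∑ e, σ e * ρ e * v := sum_le_sum fun e _ =>
        (mul_le_mul_of_nonneg_right (hμv e) (hρ.1 e)).trans_eq (by ring)

/-- LP duality certificate: `ν / (v σ)` is a primal and `μ / v` a dual feasible solution, both
with value `1 / v`. -/
lemma pModulus_one_eq_inv [Fintype Γ] (hσ : ∀ e, 0 < σ e) {μ : Γ → ℝ} {ν : E → ℝ} {v : ℝ}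
    (hv : 0 < v) (hμ : IsPmf μ) (hν : ν ∈ stdSimplex ℝ E) (hμv : ∀ e, edgeUsage N μ e ≤ v * σ e)
    (hνv : ∀ γ, v ≤ ∑ e, N γ e / σ e * ν e) : pModulus N σ 1 = v⁻¹ := by
  set ρ : E → ℝ := fun e => v⁻¹ * (ν e / σ e)
  have hρ : IsAdmissible N ρ := by
    refine ⟨fun e => mul_nonneg (inv_nonneg.2 hv.le) (div_nonneg (hν.1 e) (hσ e).le), fun γ => ?_⟩
    calc (1 : ℝ) = v⁻¹ * v := (inv_mul_cancel₀ hv.ne').symm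
      _ ≤ v⁻¹ * ∑ e, N γ e / σ e * ν e := by gcongr; exact hνv γ
      _ = ∑ e, N γ e * ρ e := by
          rw [mul_sum]
          exact sum_congr rfl fun e _ => by ring
  have hρ_energy : pEnergy σ 1 ρ = v⁻¹ := by
    rw [pEnergy_one, ← mul_one v⁻¹, ← hν.2, mul_sum]
    exact sum_congr rfl fun e _ => by simp only [ρ]; field_simp [(hσ e).ne']
  exact le_antisymm (hρ_energy ▸ pModulus_le_pEnergy (fun e => (hσ e).le) 1 hρ)
    (le_pModulus hρ fun _ => inv_le_pEnergy_one hμ hv hμv)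

end Modulus

/-- probabilistic interpretation at `p = 1`:
`Mod_{1,σ}(Γ)⁻¹ = min over pmfs μ of max_e σ(e)⁻¹ η_μ(e)`. -/
theorem modulus_prob_interp_one
    {E Γ : Type*} [Fintype E] [Fintype Γ] [Nonempty E] [Nonempty Γ]
    (N : Γ → E → ℝ) (hN : ∀ γ e, 0 ≤ N γ e) (hrow : ∀ γ, ∃ e, 0 < N γ e)
    (σ : E → ℝ) (hσ : ∀ e, 0 < σ e) :
    ∃ μ : Γ → ℝ, IsPmf μ ∧
      (∀ μ' : Γ → ℝ, IsPmf μ' →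
        Finset.univ.sup' Finset.univ_nonempty (fun e => (σ e)⁻¹ * edgeUsage N μ e) ≤
          Finset.univ.sup' Finset.univ_nonempty (fun e => (σ e)⁻¹ * edgeUsage N μ' e)) ∧
      (pModulus N σ 1)⁻¹ =
        Finset.univ.sup' Finset.univ_nonempty (fun e => (σ e)⁻¹ * edgeUsage N μ e) := by
  set A : Matrix Γ E ℝ := fun γ e => N γ e / σ e
  have hA : ∀ μ, μ ᵥ* A = fun e => (σ e)⁻¹ * edgeUsage N μ e := fun μ => funext fun e => by
    simp only [vecMul, dotProduct, edgeUsage, A, mul_sum]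
    exact sum_congr rfl fun γ _ => by ring
  obtain ⟨μ, hμ, ν, hν, hμν⟩ := A.exists_sup'_vecMul_le_mulVec
  have hv : 0 < univ.sup' univ_nonempty (μ ᵥ* A) :=
    sup'_vecMul_pos (fun γ e => div_nonneg (hN γ e) (hσ e).le)
      (fun γ => (hrow γ).imp fun e he => div_pos he (hσ e)) hμ
  simp only [hA] at hμν hv
  refine ⟨μ, hμ, fun μ' hμ' => ?_, ?_⟩
  · simpa only [hA] using le_sup'_vecMul_of_le_mulVec (A := A) hμ' hν hμν
  · rw [pModulus_one_eq_inv hσ hv hμ hν (fun e => ?_) hμν, inv_inv]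
    exact (inv_mul_le_iff₀ (hσ e)).1 (le_sup' (fun e => (σ e)⁻¹ * edgeUsage N μ e) (mem_univ e))
      |>.trans_eq (mul_comm _ _)
end
end

section
/- The function p ↦ Mod_{p,σ}(Γ) is continuous on [1,∞). -/
/-!
On a window `1 ≤ p ≤ T`, fix an admissible constant density `c ≥ 1`; its `p`-energy is at most
its `T`-energy `B`. Any admissible density of `p`-energy at most `B` has entries bounded by
`max 1 (B / σ e)`, so on the whole window the modulus is the infimum of the energy over one
compact set `K` of admissible densities. As the energy is jointly continuous in `(p, ρ)` for
`p > 0`, its infimum over the fixed compact set `K` is continuous in `p`.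
-/

open Finset

noncomputable section

lemma csInf_image_eq_of_sublevel_subset {α β : Type*} [ConditionallyCompleteLinearOrder β]
    {f : α → β} {A K : Set α} {x₀ : α} (hKA : K ⊆ A) (hx₀ : x₀ ∈ K)
    (hsub : ∀ x ∈ A, f x ≤ f x₀ → x ∈ K) (hbdd : BddBelow (f '' A)) :
    sInf (f '' K) = sInf (f '' A) := by
  have hbddK : BddBelow (f '' K) := hbdd.mono (Set.image_mono hKA)
  refine le_antisymm ?_ (csInf_le_csInf hbdd ⟨_, x₀, hx₀, rfl⟩ (Set.image_mono hKA))
  refine le_csInf ⟨_, x₀, hKA hx₀, rfl⟩ ?_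
  rintro _ ⟨x, hx, rfl⟩
  rcases le_total (f x) (f x₀) with hle | hle
  · exact csInf_le hbddK ⟨x, hsub x hx hle, rfl⟩
  · exact (csInf_le hbddK ⟨x₀, hx₀, rfl⟩).trans hle

lemma le_max_one_div_of_mul_rpow_le {s x p B : ℝ} (hs : 0 < s) (hp : 1 ≤ p)
    (h : s * x ^ p ≤ B) : x ≤ max 1 (B / s) := by
  rcases le_total x 1 with hx | hx
  · exact hx.trans (le_max_left _ _)
  · calc x ≤ x ^ p := Real.self_le_rpow_of_one_le hx hp
      _ ≤ B / s := by rw [le_div_iff₀ hs]; linarith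
      _ ≤ max 1 (B / s) := le_max_right _ _

section Energy

variable {E : Type*} [Fintype E] {σ : E → ℝ}

lemma pEnergy_nonneg (hσ : ∀ e, 0 ≤ σ e) (p : ℝ) {ρ : E → ℝ} (hρ : ∀ e, 0 ≤ ρ e) :
    0 ≤ pEnergy σ p ρ :=
  sum_nonneg fun e _ => mul_nonneg (hσ e) (Real.rpow_nonneg (hρ e) p)

lemma pEnergy_le_pEnergy_of_le (hσ : ∀ e, 0 ≤ σ e) {ρ : E → ℝ} (hρ : ∀ e, 1 ≤ ρ e)
    {p q : ℝ} (hpq : p ≤ q) : pEnergy σ p ρ ≤ pEnergy σ q ρ :=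
  sum_le_sum fun e _ =>
    mul_le_mul_of_nonneg_left (Real.rpow_le_rpow_of_exponent_le (hρ e) hpq) (hσ e)

lemma le_max_one_div_of_pEnergy_le (hσ : ∀ e, 0 < σ e) {ρ : E → ℝ} (hρ : ∀ e, 0 ≤ ρ e)
    {p B : ℝ} (hp : 1 ≤ p) (h : pEnergy σ p ρ ≤ B) (e : E) : ρ e ≤ max 1 (B / σ e) := by
  refine le_max_one_div_of_mul_rpow_le (hσ e) hp (le_trans ?_ h)
  exact single_le_sum (f := fun e => σ e * ρ e ^ p)
    (fun e _ => mul_nonneg (hσ e).le (Real.rpow_nonneg (hρ e) p)) (mem_univ e)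

lemma continuousOn_pEnergy :
    ContinuousOn (fun z : ℝ × (E → ℝ) => pEnergy σ z.1 z.2) (Set.Ioi 0 ×ˢ Set.univ) := by
  intro z hz
  refine ContinuousAt.continuousWithinAt (tendsto_finsetSum _ fun e _ => ?_)
  have hpair : Continuous fun w : ℝ × (E → ℝ) => (w.2 e, w.1) :=
    ((continuous_apply e).comp continuous_snd).prodMk continuous_fst
  exact continuousAt_const.mul <| ContinuousAt.comp (f := fun w : ℝ × (E → ℝ) => (w.2 e, w.1))
    (Real.continuousAt_rpow (z.2 e, z.1) (Or.inr hz.1)) hpair.continuousAt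

end Energy

section Modulus

variable {E Γ : Type*} [Fintype E] {N : Γ → E → ℝ} {σ : E → ℝ}

lemma exists_one_le_isAdmissible_const [Fintype Γ] (hN : ∀ γ e, 0 ≤ N γ e)
    (hrow : ∀ γ, ∃ e, 0 < N γ e) : ∃ c : ℝ, 1 ≤ c ∧ IsAdmissible N (fun _ => c) := by
  have hpos : ∀ γ, 0 < ∑ e, N γ e := fun γ =>
    let ⟨e, he⟩ := hrow γ
    sum_pos' (fun e _ => hN γ e) ⟨e, mem_univ e, he⟩
  set s : ℝ := ∑ γ, (∑ e, N γ e)⁻¹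
  have hs : ∀ γ, (∑ e, N γ e)⁻¹ ≤ s := fun γ =>
    single_le_sum (f := fun γ => (∑ e, N γ e)⁻¹) (fun γ _ => (inv_pos.2 (hpos γ)).le)
      (mem_univ γ)
  have hs0 : 0 ≤ s := sum_nonneg fun γ _ => (inv_pos.2 (hpos γ)).le
  refine ⟨1 + s, by linarith, fun _ => by linarith, fun γ => ?_⟩
  calc (1 : ℝ) = (∑ e, N γ e)⁻¹ * ∑ e, N γ e := (inv_mul_cancel₀ (hpos γ).ne').symm
    _ ≤ (1 + s) * ∑ e, N γ e := mul_le_mul_of_nonneg_right (by linarith [hs γ]) (hpos γ).le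
    _ = ∑ e, N γ e * (1 + s) := by rw [mul_comm, sum_mul]

lemma isClosed_setOf_isAdmissible : IsClosed {ρ : E → ℝ | IsAdmissible N ρ} := by
  simp only [IsAdmissible, Set.ofPred_and, Set.ofPred_forall]
  exact (isClosed_iInter fun e => isClosed_le continuous_const (continuous_apply e)).inter
    (isClosed_iInter fun γ => isClosed_le continuous_const
      (continuous_finsetSum _ fun e _ => continuous_const.mul (continuous_apply e)))

lemma pModulus_eq_sInf_image (p : ℝ) :
    pModulus N σ p = sInf (pEnergy σ p '' {ρ | IsAdmissible N ρ}) := by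
  simp only [pModulus, Set.image, Set.mem_ofPred_eq, eq_comm]

lemma exists_isCompact_pModulus_eq_sInf [Fintype Γ] (hN : ∀ γ e, 0 ≤ N γ e)
    (hrow : ∀ γ, ∃ e, 0 < N γ e) (hσ : ∀ e, 0 < σ e) (T : ℝ) :
    ∃ K : Set (E → ℝ), IsCompact K ∧
      ∀ p ∈ Set.Icc 1 T, pModulus N σ p = sInf (pEnergy σ p '' K) := by
  obtain ⟨c, hc, hcadm⟩ := exists_one_le_isAdmissible_const hN hrow
  set B := pEnergy σ T (fun _ => c)
  set K := {ρ : E → ℝ | IsAdmissible N ρ} ∩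
    Set.univ.pi fun e => Set.Icc 0 (max 1 (B / σ e))
  refine ⟨K, (isCompact_univ_pi fun _ => isCompact_Icc).inter_left isClosed_setOf_isAdmissible,
    fun p hp => ?_⟩
  have hcK : (fun _ => c) ∈ K := by
    refine ⟨hcadm, fun e _ => ⟨by linarith, ?_⟩⟩
    exact le_max_one_div_of_pEnergy_le hσ (fun _ => by linarith) (hp.1.trans hp.2) le_rfl e
  rw [pModulus_eq_sInf_image]
  refine (csInf_image_eq_of_sublevel_subset Set.inter_subset_left hcK ?_ ?_).symm
  · intro ρ hρ hle
    have hB : pEnergy σ p ρ ≤ B :=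
      hle.trans (pEnergy_le_pEnergy_of_le (fun e => (hσ e).le) (fun _ => hc) hp.2)
    exact ⟨hρ, fun e _ => ⟨hρ.1 e, le_max_one_div_of_pEnergy_le hσ hρ.1 hp.1 hB e⟩⟩
  · exact ⟨0, by rintro _ ⟨ρ, hρ, rfl⟩; exact pEnergy_nonneg (fun e => (hσ e).le) p hρ.1⟩

lemma continuousOn_pModulus_Icc [Fintype Γ] (hN : ∀ γ e, 0 ≤ N γ e)
    (hrow : ∀ γ, ∃ e, 0 < N γ e) (hσ : ∀ e, 0 < σ e) (T : ℝ) :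
    ContinuousOn (pModulus N σ) (Set.Icc 1 T) := by
  obtain ⟨K, hK, hmod⟩ := exists_isCompact_pModulus_eq_sInf hN hrow hσ T
  -- `max p 1` extends the energy continuously to all `p`, unchanged for `p ≥ 1`.
  have hcont : Continuous fun z : ℝ × (E → ℝ) => pEnergy σ (max z.1 1) z.2 :=
    continuousOn_pEnergy.comp_continuous
      ((continuous_fst.max continuous_const).prodMk continuous_snd)
      fun z => ⟨one_pos.trans_le (le_max_right z.1 1), trivial⟩
  refine (hK.continuous_sInf (f := fun p ρ => pEnergy σ (max p 1) ρ) hcont).continuousOn.congr ?_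
  intro p hp
  simp only [hmod p hp, max_eq_left hp.1]

end Modulus

theorem modulus_continuousOn_general
    {E Γ : Type*} [Fintype E] [Fintype Γ]
    (N : Γ → E → ℝ) (hN : ∀ γ e, 0 ≤ N γ e) (hrow : ∀ γ, ∃ e, 0 < N γ e)
    (σ : E → ℝ) (hσ : ∀ e, 0 < σ e) :
    ContinuousOn (fun p : ℝ => pModulus N σ p) (Set.Ici 1) := by
  intro p hp
  have hwindow := continuousOn_pModulus_Icc hN hrow hσ (p + 1) p ⟨hp, by linarith⟩
  rwa [← Set.Ici_inter_Iic, continuousWithinAt_inter (Iic_mem_nhds (by linarith))] at hwindow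

/-- `p ↦ Mod_{p,σ}(Γ)` is continuous on `[1,∞)`. -/
theorem modulus_continuousOn
    {E Γ : Type*} [Fintype E] [Fintype Γ] [Nonempty E] [Nonempty Γ]
    (N : Γ → E → ℝ) (hN : ∀ γ e, 0 ≤ N γ e) (hrow : ∀ γ, ∃ e, 0 < N γ e)
    (σ : E → ℝ) (hσ : ∀ e, 0 < σ e) :
    ContinuousOn (fun p : ℝ => pModulus N σ p) (Set.Ici 1) :=
  modulus_continuousOn_general N hN hrow σ hσ
end
end
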